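/- Let G be a group acting by isometries on a metric space (X, d) and let n ∈ ℕ. Then the family (U^∞_m)_{m ∈ ℕ} is a basis of entourages for a metrisable uniform structure 𝓤^∞ on Xⁿ ⫽ G; this uniform structure is coarser than the uniform structure induced by the metric on Xⁿ ⫽ G, and it induces the same topology on Xⁿ ⫽ G as the metric. -/

import Mathlib

set_option linter.unusedSectionVars false

open Metric MulAction Filter Set Topology Pointwise

section OrbitQuotient

variable (G : Type*) {X : Type*} [Group G] [PseudoMetricSpace X] [MulAction G X]

/-- The distance from a point `x` to the orbit of `y` under the group `G`. -/
noncomputable def orbDist (x y : X) : ℝ := ⨅ g : G, dist x (g • y)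

theorem orbDist_nonneg (x y : X) : 0 ≤ orbDist G x y :=
  Real.iInf_nonneg fun _ => dist_nonneg

theorem orbDist_le (x y : X) (g : G) : orbDist G x y ≤ dist x (g • y) :=
  ciInf_le ⟨0, by rintro r ⟨g, rfl⟩; exact dist_nonneg⟩ g

theorem orbit_nonempty (y : X) : (MulAction.orbit G y).Nonempty :=
  ⟨y, MulAction.mem_orbit_self y⟩

theorem orbDist_eq_infDist (x y : X) : orbDist G x y = Metric.infDist x (MulAction.orbit G y) := by
  haveI : Nonempty (MulAction.orbit G y) := (orbit_nonempty G y).to_subtype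
  rw [Metric.infDist_eq_iInf]
  apply le_antisymm
  · refine le_ciInf fun z => ?_
    obtain ⟨g, hg⟩ := z.2
    have hg' : g • y = (z : X) := hg
    calc orbDist G x y ≤ dist x (g • y) := orbDist_le G x y g
      _ = dist x z := by rw [hg']
  · refine le_ciInf fun g => ?_
    exact ciInf_le ⟨0, by rintro r ⟨z, rfl⟩; exact dist_nonneg⟩
      (⟨g • y, MulAction.mem_orbit y g⟩ : MulAction.orbit G y)

variable [IsIsometricSMul G X]

theorem orbDist_self (x : X) : orbDist G x x = 0 :=
  le_antisymm (by simpa using orbDist_le G x x 1) (orbDist_nonneg G x x)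

theorem orbDist_comm (x y : X) : orbDist G x y = orbDist G y x := by
  have key : ∀ u v : X, orbDist G v u ≤ orbDist G u v := by
    intro u v
    refine le_ciInf fun g => ?_
    calc orbDist G v u ≤ dist v (g⁻¹ • u) := orbDist_le G v u g⁻¹
      _ = dist (g • v) (g • g⁻¹ • u) := (dist_smul g v _).symm
      _ = dist u (g • v) := by rw [smul_inv_smul, dist_comm]
  exact le_antisymm (key y x) (key x y)

theorem orbDist_triangle (x y z : X) : orbDist G x z ≤ orbDist G x y + orbDist G y z := by
  refine le_of_forall_pos_le_add fun ε hε => ?_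
  obtain ⟨g, hg⟩ : ∃ g : G, dist x (g • y) < orbDist G x y + ε / 2 :=
    exists_lt_of_ciInf_lt (by change orbDist G x y < _; linarith)
  obtain ⟨h, hh⟩ : ∃ h : G, dist y (h • z) < orbDist G y z + ε / 2 :=
    exists_lt_of_ciInf_lt (by change orbDist G y z < _; linarith)
  calc orbDist G x z ≤ dist x ((g * h) • z) := orbDist_le G x z (g * h)
    _ ≤ dist x (g • y) + dist (g • y) ((g * h) • z) := dist_triangle _ _ _
    _ = dist x (g • y) + dist y (h • z) := by rw [mul_smul, dist_smul]
    _ ≤ orbDist G x y + ε / 2 + (orbDist G y z + ε / 2) := by linarith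
    _ = orbDist G x y + orbDist G y z + ε := by ring

theorem closure_orbit_mono {u v : X} (hu : u ∈ closure (MulAction.orbit G v)) :
    closure (MulAction.orbit G u) ⊆ closure (MulAction.orbit G v) := by
  refine closure_minimal ?_ isClosed_closure
  rintro _ ⟨g, rfl⟩
  have : g • u ∈ g • closure (MulAction.orbit G v) := Set.smul_mem_smul_set hu
  rwa [← closure_smul, MulAction.smul_orbit] at this

theorem closure_orbit_eq_of_orbDist_eq_zero {x y : X} (h : orbDist G x y = 0) :
    closure (MulAction.orbit G x) = closure (MulAction.orbit G y) := by
  have hx : x ∈ closure (MulAction.orbit G y) := by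
    rw [Metric.mem_closure_iff_infDist_zero (orbit_nonempty G y), ← orbDist_eq_infDist]
    exact h
  have hy : y ∈ closure (MulAction.orbit G x) := by
    rw [Metric.mem_closure_iff_infDist_zero (orbit_nonempty G x), ← orbDist_eq_infDist,
      ← orbDist_comm]
    exact h
  exact le_antisymm (closure_orbit_mono G hx) (closure_orbit_mono G hy)

variable (X) in
/-- Points of `X` are equivalent when they have the same orbit closure. -/
def orbSetoid : Setoid X :=
  ⟨fun x y => closure (MulAction.orbit G x) = closure (MulAction.orbit G y),
    fun _ => rfl, Eq.symm, Eq.trans⟩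

variable (X) in
/-- The space `X ⫽ G` of orbit closures. -/
abbrev OrbQuot : Type _ := Quotient (orbSetoid G X)

/-- The orbit closure of a point, as an element of `X ⫽ G`. -/
abbrev OrbQuot.mk (x : X) : OrbQuot G X := Quotient.mk (orbSetoid G X) x

theorem orbDist_congr {x x' y : X}
    (hx : closure (MulAction.orbit G x) = closure (MulAction.orbit G x')) :
    orbDist G x y = orbDist G x' y := by
  have key : ∀ u u' v : X, u ∈ closure (MulAction.orbit G u') →
      orbDist G u' v ≤ orbDist G u v := by
    intro u u' v hu
    refine le_of_forall_pos_le_add fun ε hε => ?_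
    obtain ⟨g, hg⟩ : ∃ g : G, dist u (g • v) < orbDist G u v + ε / 2 :=
      exists_lt_of_ciInf_lt (by change orbDist G u v < _; linarith)
    have h00 : orbDist G u' u = 0 := by
      rw [orbDist_comm, orbDist_eq_infDist,
        ← Metric.mem_closure_iff_infDist_zero (orbit_nonempty G u')]
      exact hu
    obtain ⟨h, hh⟩ : ∃ h : G, dist u' (h • u) < ε / 2 :=
      exists_lt_of_ciInf_lt (by change orbDist G u' u < _; rw [h00]; linarith)
    calc orbDist G u' v ≤ dist u' ((h * g) • v) := orbDist_le G u' v (h * g)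
      _ ≤ dist u' (h • u) + dist (h • u) ((h * g) • v) := dist_triangle _ _ _
      _ = dist u' (h • u) + dist u (g • v) := by rw [mul_smul, dist_smul]
      _ ≤ ε / 2 + (orbDist G u v + ε / 2) := by linarith
      _ = orbDist G u v + ε := by ring
  have h1 : x ∈ closure (MulAction.orbit G x') := by
    rw [← hx]; exact subset_closure (MulAction.mem_orbit_self x)
  have h2 : x' ∈ closure (MulAction.orbit G x) := by
    rw [hx]; exact subset_closure (MulAction.mem_orbit_self x')
  exact le_antisymm (key x' x y h2) (key x x' y h1)

noncomputable instance OrbQuot.metricSpace : MetricSpace (OrbQuot G X) where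
  dist p q := orbDist G p.out q.out
  dist_self p := orbDist_self G _
  dist_comm p q := orbDist_comm G _ _
  dist_triangle p q r := orbDist_triangle G _ _ _
  eq_of_dist_eq_zero {p q} h := by
    rw [← p.out_eq, ← q.out_eq]
    exact Quotient.sound (closure_orbit_eq_of_orbDist_eq_zero G h)

theorem OrbQuot.dist_mk (x y : X) :
    dist (OrbQuot.mk G x) (OrbQuot.mk G y) = orbDist G x y := by
  have hx : closure (MulAction.orbit G (Quotient.out (OrbQuot.mk G x))) =
      closure (MulAction.orbit G x) := Quotient.exact (Quotient.out_eq (OrbQuot.mk G x))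
  have hy : closure (MulAction.orbit G (Quotient.out (OrbQuot.mk G y))) =
      closure (MulAction.orbit G y) := Quotient.exact (Quotient.out_eq (OrbQuot.mk G y))
  calc dist (OrbQuot.mk G x) (OrbQuot.mk G y)
      = orbDist G (Quotient.out (OrbQuot.mk G x)) (Quotient.out (OrbQuot.mk G y)) := rfl
    _ = orbDist G x (Quotient.out (OrbQuot.mk G y)) := orbDist_congr G hx
    _ = orbDist G (Quotient.out (OrbQuot.mk G y)) x := orbDist_comm G _ _
    _ = orbDist G y x := orbDist_congr G hy
    _ = orbDist G x y := (orbDist_comm G _ _).symm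

/-- Subgroups act isometrically whenever the ambient group does. -/
instance Subgroup.isometricSMul (H : Subgroup G) : IsIsometricSMul H X :=
  ⟨fun h => isometry_smul X (h : G)⟩

end OrbitQuotient

section Uinfty

open scoped Classical

variable (G : Type*) {X : Type*} [Group G] [PseudoMetricSpace X] [MulAction G X]

/-- The distance between the `G`-orbit closures of the restrictions of two tuples to a set `I`
of indices. -/
noncomputable def dRest {n : ℕ} (I : Finset (Fin n)) (p q : OrbQuot G (Fin n → X)) : ℝ :=
  ⨅ g : G, ((I.sup fun i => nndist (p.out i) (g • q.out i) : NNReal) : ℝ)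

/-- The set `I(p, i, m)` of indices `j` such that the `i`-th and `j`-th coordinates of `p` are
at distance less than `2 ^ m`. -/
noncomputable def indexSet {n : ℕ} (p : OrbQuot G (Fin n → X)) (i : Fin n) (m : ℕ) :
    Finset (Fin n) :=
  Finset.univ.filter fun j => dist (p.out i) (p.out j) < 2 ^ m

/-- The basic entourages `U^∞_m` of the uniformity `𝓤^∞` on `Xⁿ ⫽ G`. -/
noncomputable def Uinf (n : ℕ) (m : ℕ) :
    Set (OrbQuot G (Fin n → X) × OrbQuot G (Fin n → X)) :=
  {pq | ∀ i : Fin n,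
    dRest G (indexSet G pq.1 i m) pq.1 pq.2 < (2 : ℝ) ^ (-(m : ℤ)) ∧
    dRest G (indexSet G pq.2 i m) pq.1 pq.2 < (2 : ℝ) ^ (-(m : ℤ))}

end Uinfty

section Proof10

open scoped Classical Uniformity SetRel

variable {G X : Type*} [Group G] [MetricSpace X] [MulAction G X] [IsIsometricSMul G X] {n : ℕ}

private lemma coe_sup_le {α : Type*} {I : Finset α} {f : α → NNReal} {x : ℝ} (hx : 0 ≤ x)
    (h : ∀ j ∈ I, (f j : ℝ) ≤ x) : ((I.sup f : NNReal) : ℝ) ≤ x := by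
  rw [← Real.coe_toNNReal x hx, NNReal.coe_le_coe]
  exact Finset.sup_le fun j hj => by
    rw [← NNReal.coe_le_coe, Real.coe_toNNReal x hx]; exact h j hj

private lemma dRest_le' (I : Finset (Fin n)) (p q : OrbQuot G (Fin n → X)) (g : G) :
    dRest G I p q ≤ ((I.sup fun i => nndist (p.out i) (g • q.out i) : NNReal) : ℝ) :=
  ciInf_le ⟨0, by rintro r ⟨g, rfl⟩; exact NNReal.coe_nonneg _⟩ g

private lemma dRest_nonneg' (I : Finset (Fin n)) (p q : OrbQuot G (Fin n → X)) :
    0 ≤ dRest G I p q :=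
  Real.iInf_nonneg fun _ => NNReal.coe_nonneg _

private lemma dRest_mono' {I J : Finset (Fin n)} (h : I ⊆ J) (p q : OrbQuot G (Fin n → X)) :
    dRest G I p q ≤ dRest G J p q :=
  le_ciInf fun g => (dRest_le' I p q g).trans (NNReal.coe_le_coe.2 (Finset.sup_mono h))

private lemma dRest_comm' (I : Finset (Fin n)) (p q : OrbQuot G (Fin n → X)) :
    dRest G I p q = dRest G I q p := by
  have key : ∀ p q : OrbQuot G (Fin n → X), dRest G I q p ≤ dRest G I p q := by
    intro p q
    refine le_ciInf fun g => ?_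
    refine (dRest_le' I q p g⁻¹).trans (le_of_eq ?_)
    congr 1
    refine Finset.sup_congr rfl fun j _ => ?_
    rw [← nndist_smul g (q.out j) (g⁻¹ • p.out j), smul_inv_smul, nndist_comm]
  exact le_antisymm (key q p) (key p q)

private lemma dRest_self' (I : Finset (Fin n)) (p : OrbQuot G (Fin n → X)) :
    dRest G I p p = 0 := by
  refine le_antisymm ((dRest_le' I p p 1).trans_eq ?_) (dRest_nonneg' I p p)
  simp

private lemma exists_of_dRest_lt {I : Finset (Fin n)} {p q : OrbQuot G (Fin n → X)} {c : ℝ}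
    (h : dRest G I p q < c) :
    ∃ g : G, ((I.sup fun i => nndist (p.out i) (g • q.out i) : NNReal) : ℝ) < c :=
  exists_lt_of_ciInf_lt h

private lemma dist_eq_dRest_univ (p q : OrbQuot G (Fin n → X)) :
    dist p q = dRest G Finset.univ p q := by
  show (⨅ g : G, dist p.out (g • q.out)) = _
  unfold dRest
  exact iInf_congr fun g => by rw [dist_pi_def]; rfl

private lemma dRest_le_dist (I : Finset (Fin n)) (p q : OrbQuot G (Fin n → X)) :
    dRest G I p q ≤ dist p q := by
  rw [dist_eq_dRest_univ]
  exact dRest_mono' (Finset.subset_univ I) p q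

private lemma mem_indexSet {p : OrbQuot G (Fin n → X)} {i j : Fin n} {m : ℕ} :
    j ∈ indexSet G p i m ↔ dist (p.out i) (p.out j) < 2 ^ m := by
  simp [indexSet]

private lemma self_mem_indexSet {p : OrbQuot G (Fin n → X)} {i : Fin n} {m : ℕ} :
    i ∈ indexSet G p i m :=
  mem_indexSet.2 (by simp)

private lemma indexSet_mono' {p : OrbQuot G (Fin n → X)} {i : Fin n} {m m' : ℕ}
    (h : m ≤ m') : indexSet G p i m ⊆ indexSet G p i m' := fun j hj =>
  mem_indexSet.2 ((mem_indexSet.1 hj).trans_le (by gcongr <;> norm_num))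

private lemma two_zpow_succ (m : ℕ) :
    (2:ℝ) ^ (-((m+1:ℕ) : ℤ)) + (2:ℝ) ^ (-((m+1:ℕ) : ℤ)) = (2:ℝ) ^ (-(m : ℤ)) := by
  have h : (-((m+1:ℕ)) : ℤ) = -(m:ℤ) - 1 := by push_cast; ring
  rw [h, zpow_sub₀ (two_ne_zero), zpow_one]
  ring

private lemma zpow_neg_natCast_two (m : ℕ) : (2:ℝ) ^ (-(m:ℤ)) = (1/2:ℝ) ^ m := by
  rw [zpow_neg, zpow_natCast, one_div, inv_pow]

private lemma comp_aux {m : ℕ} {p q r : OrbQuot G (Fin n → X)} {i : Fin n}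
    (h1 : dRest G (indexSet G p i (m+1)) p q < (2:ℝ) ^ (-((m+1:ℕ)) : ℤ))
    (h2 : dRest G (indexSet G q i (m+1)) q r < (2:ℝ) ^ (-((m+1:ℕ)) : ℤ)) :
    dRest G (indexSet G p i m) p r < (2:ℝ) ^ (-(m : ℤ)) := by
  obtain ⟨g, hg⟩ := exists_of_dRest_lt h1
  obtain ⟨h, hh⟩ := exists_of_dRest_lt h2
  set A : ℝ := (((indexSet G p i (m+1)).sup fun j => nndist (p.out j) (g • q.out j) : NNReal) : ℝ)
    with hA
  set B : ℝ := (((indexSet G q i (m+1)).sup fun j => nndist (q.out j) (h • r.out j) : NNReal) : ℝ)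
    with hB
  have hA0 : 0 ≤ A := NNReal.coe_nonneg _
  have hB0 : 0 ≤ B := NNReal.coe_nonneg _
  have hI1 : indexSet G p i m ⊆ indexSet G p i (m+1) := indexSet_mono' (Nat.le_succ m)
  have hdg : ∀ j ∈ indexSet G p i (m+1), dist (p.out j) (g • q.out j) ≤ A := by
    intro j hj
    rw [← coe_nndist]
    exact_mod_cast Finset.le_sup (f := fun j => nndist (p.out j) (g • q.out j)) hj
  have hdh : ∀ j ∈ indexSet G q i (m+1), dist (q.out j) (h • r.out j) ≤ B := by
    intro j hj
    rw [← coe_nndist]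
    exact_mod_cast Finset.le_sup (f := fun j => nndist (q.out j) (h • r.out j)) hj
  have hI2 : indexSet G p i m ⊆ indexSet G q i (m+1) := by
    intro j hj
    have hji : dist (p.out i) (p.out j) < 2 ^ m := mem_indexSet.1 hj
    have hgi := hdg i self_mem_indexSet
    have hgj := hdg j (hI1 hj)
    refine mem_indexSet.2 ?_
    have e1 : dist (q.out i) (q.out j) = dist (g • q.out i) (g • q.out j) :=
      (dist_smul g _ _).symm
    have e2 : dist (g • q.out i) (g • q.out j) ≤
        dist (g • q.out i) (p.out i) + dist (p.out i) (p.out j) + dist (p.out j) (g • q.out j) :=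
      dist_triangle4 _ _ _ _
    have e3 : dist (g • q.out i) (p.out i) = dist (p.out i) (g • q.out i) := dist_comm _ _
    have hsmall : (2:ℝ) ^ (-((m+1:ℕ)) : ℤ) ≤ 1/2 := by
      rw [zpow_neg_natCast_two]
      have : ((1:ℝ)/2) ^ (m+1) ≤ (1/2) ^ 1 :=
        pow_le_pow_of_le_one (by norm_num) (by norm_num) (by omega)
      simpa using this
    have hbig : (1:ℝ) ≤ 2 ^ m := one_le_pow₀ (by norm_num)
    have hps : (2:ℝ) ^ (m+1) = 2 ^ m + 2 ^ m := by rw [pow_succ]; ring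
    rw [e1]
    calc dist (g • q.out i) (g • q.out j)
        ≤ dist (g • q.out i) (p.out i) + dist (p.out i) (p.out j) + dist (p.out j) (g • q.out j) :=
          e2
      _ < 2 ^ (m+1) := by
          rw [e3]
          have g1 := lt_of_le_of_lt hgi hg
          have g2 := lt_of_le_of_lt hgj hg
          linarith
  calc dRest G (indexSet G p i m) p r
      ≤ (((indexSet G p i m).sup fun j => nndist (p.out j) ((g * h) • r.out j) : NNReal) : ℝ) :=
        dRest_le' _ p r (g * h)
    _ ≤ A + B := by
        refine coe_sup_le (by linarith) fun j hj => ?_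
        rw [coe_nndist]
        have e : (g * h) • r.out j = g • h • r.out j := mul_smul g h _
        calc dist (p.out j) ((g * h) • r.out j)
            ≤ dist (p.out j) (g • q.out j) + dist (g • q.out j) ((g * h) • r.out j) :=
              dist_triangle _ _ _
          _ = dist (p.out j) (g • q.out j) + dist (q.out j) (h • r.out j) := by
              rw [e, dist_smul]
          _ ≤ A + B := add_le_add (hdg j (hI1 hj)) (hdh j (hI2 hj))
    _ < (2:ℝ) ^ (-(m : ℤ)) := by
        have := two_zpow_succ m
        linarith

private lemma Uinf_symm {m : ℕ} {x : OrbQuot G (Fin n → X) × OrbQuot G (Fin n → X)}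
    (hpq : x ∈ Uinf G n m) : x.swap ∈ Uinf G n m := by
  obtain ⟨p, q⟩ := x
  intro i
  obtain ⟨h1, h2⟩ := hpq i
  exact ⟨by rw [dRest_comm']; exact h2, by rw [dRest_comm']; exact h1⟩

private lemma Uinf_antitone {m m' : ℕ} (h : m ≤ m') : Uinf (X := X) G n m' ⊆ Uinf (X := X) G n m := by
  rintro ⟨p, q⟩ hpq i
  obtain ⟨h1, h2⟩ := hpq i
  have hz : (2:ℝ) ^ (-(m':ℤ)) ≤ (2:ℝ) ^ (-(m:ℤ)) := by
    have : (-(m':ℤ)) ≤ -(m:ℤ) := neg_le_neg (by exact_mod_cast h)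
    exact zpow_le_zpow_right₀ one_le_two this
  constructor
  · exact lt_of_le_of_lt (dRest_mono' (indexSet_mono' h) p q) (lt_of_lt_of_le h1 hz)
  · exact lt_of_le_of_lt (dRest_mono' (indexSet_mono' h) p q) (lt_of_lt_of_le h2 hz)

private lemma Uinf_comp {m : ℕ} :
    Uinf (X := X) G n (m+1) ○ Uinf (X := X) G n (m+1) ⊆ Uinf (X := X) G n m := by
  rintro ⟨p, r⟩ ⟨q, hpq, hqr⟩ i
  constructor
  · exact comp_aux (hpq i).1 (hqr i).1
  · rw [dRest_comm']
    refine comp_aux (q := q) ?_ ?_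
    · rw [dRest_comm']; exact (hqr i).2
    · rw [dRest_comm']; exact (hpq i).2

private lemma Uinf_refl {m : ℕ} : SetRel.id ⊆ Uinf (X := X) G n m := by
  rintro ⟨p, q⟩ h i
  have hpq : p = q := SetRel.mem_id.1 h
  subst hpq
  have : (0:ℝ) < (2:ℝ) ^ (-(m:ℤ)) := by positivity
  exact ⟨by rw [dRest_self']; exact this, by rw [dRest_self']; exact this⟩

private lemma mem_Uinf_of_dist_lt {m : ℕ} {p q : OrbQuot G (Fin n → X)}
    (h : dist p q < (2:ℝ) ^ (-(m:ℤ))) : (p, q) ∈ Uinf G n m := fun i =>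
  ⟨lt_of_le_of_lt (dRest_le_dist _ p q) h, lt_of_le_of_lt (dRest_le_dist _ p q) h⟩

private lemma mk_lipschitz :
    LipschitzWith 1 (OrbQuot.mk G : (Fin n → X) → OrbQuot G (Fin n → X)) := by
  refine LipschitzWith.of_dist_le_mul fun a b => ?_
  rw [OrbQuot.dist_mk, NNReal.coe_one, one_mul]
  exact (orbDist_le G a b 1).trans (by rw [one_smul])

private lemma quot_top_eq :
    (instTopologicalSpaceQuotient : TopologicalSpace (OrbQuot G (Fin n → X))) =
      (UniformSpace.toTopologicalSpace : TopologicalSpace (OrbQuot G (Fin n → X))) := by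
  have hcont : Continuous[_, UniformSpace.toTopologicalSpace]
      (OrbQuot.mk G : (Fin n → X) → OrbQuot G (Fin n → X)) :=
    (mk_lipschitz).continuous
  refine le_antisymm (continuous_iff_coinduced_le.1 hcont) ?_
  rw [TopologicalSpace.le_def]
  intro s hs
  rw [isOpen_coinduced] at hs
  rw [Metric.isOpen_iff]
  intro p hp
  have hpmem : p.out ∈ (Quotient.mk (orbSetoid G (Fin n → X)) ⁻¹' s) := by
    show Quotient.mk _ p.out ∈ s
    rw [Quotient.out_eq]
    exact hp
  obtain ⟨ε, hε, hb⟩ := Metric.isOpen_iff.1 hs p.out hpmem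
  refine ⟨ε, hε, fun q hq => ?_⟩
  have hlt : (⨅ g : G, dist p.out (g • q.out)) < ε := by
    have : dist p q < ε := by rw [dist_comm]; exact Metric.mem_ball.1 hq
    exact this
  obtain ⟨g, hg⟩ := exists_lt_of_ciInf_lt hlt
  have hmem : (Quotient.mk (orbSetoid G (Fin n → X)) (g • q.out) : OrbQuot G (Fin n → X)) ∈ s :=
    hb (Metric.mem_ball'.2 hg)
  have heq : (Quotient.mk (orbSetoid G (Fin n → X)) (g • q.out) : OrbQuot G (Fin n → X)) = q := by
    refine (Quotient.sound ?_).trans (Quotient.out_eq q)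
    show closure (MulAction.orbit G (g • q.out)) = closure (MulAction.orbit G q.out)
    rw [MulAction.orbit_smul]
  rwa [heq] at hmem

end Proof10

/-- The sets `U^∞_m` form a basis of entourages of a metrisable uniform
structure `𝓤^∞` on `Xⁿ ⫽ G` that is coarser than the metric uniformity and induces the same
topology. -/
theorem statement10 (G X : Type*) [Group G] [MetricSpace X] [MulAction G X]
    [IsIsometricSMul G X] (n : ℕ) :
    ∃ u : UniformSpace (OrbQuot G (Fin n → X)),
      (@uniformity _ u = ⨅ m : ℕ, Filter.principal (Uinf G n m)) ∧
      (@uniformity _ u).IsCountablyGenerated ∧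
      uniformity (OrbQuot G (Fin n → X)) ≤ ⨅ m : ℕ, Filter.principal (Uinf G n m) ∧
      u.toTopologicalSpace = (inferInstance : TopologicalSpace (OrbQuot G (Fin n → X))) := by
  classical
  have hmem : ∀ m, Uinf (X := X) G n m ∈ (⨅ m : ℕ, Filter.principal (Uinf (X := X) G n m)) := fun m =>
    Filter.mem_iInf_of_mem m (Filter.mem_principal_self _)
  have hdir : Directed (· ≥ ·) (Uinf (X := X) G n) := fun m m' =>
    ⟨max m m', Uinf_antitone (le_max_left _ _), Uinf_antitone (le_max_right _ _)⟩
  have hbasis : (⨅ m : ℕ, Filter.principal (Uinf (X := X) G n m)).HasBasis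
      (fun _ => True) (Uinf (X := X) G n) := Filter.hasBasis_iInf_principal hdir
  have hrefl : Filter.principal SetRel.id ≤ ⨅ m : ℕ, Filter.principal (Uinf (X := X) G n m) :=
    le_iInf fun m => Filter.principal_mono.2 Uinf_refl
  have hsymm : Filter.Tendsto Prod.swap (⨅ m : ℕ, Filter.principal (Uinf (X := X) G n m))
      (⨅ m : ℕ, Filter.principal (Uinf (X := X) G n m)) :=
    (hbasis.tendsto_iff hbasis).2 fun m _ => ⟨m, trivial, fun _ hy => Uinf_symm hy⟩
  have hcomp : ((⨅ m : ℕ, Filter.principal (Uinf (X := X) G n m)).lift' fun s => SetRel.comp s s) ≤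
      ⨅ m : ℕ, Filter.principal (Uinf (X := X) G n m) := by
    refine le_iInf fun m => Filter.le_principal_iff.2 ?_
    refine (Filter.mem_lift'_sets (monotone_id.relComp monotone_id)).2 ?_
    exact ⟨Uinf (X := X) G n (m+1), hmem _, Uinf_comp⟩
  set core : UniformSpace.Core (OrbQuot G (Fin n → X)) := ⟨_, hrefl, hsymm, hcomp⟩
  have hnhds : ∀ x : OrbQuot G (Fin n → X),
      @nhds _ (UniformSpace.toTopologicalSpace) x =
        Filter.comap (Prod.mk x) (⨅ m : ℕ, Filter.principal (Uinf (X := X) G n m)) := by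
    intro x
    refine le_antisymm ?_ ?_
    · -- metric nhds is finer
      refine (Metric.nhds_basis_ball.le_basis_iff (hbasis.comap (Prod.mk x))).2 ?_
      intro m _
      refine ⟨(2:ℝ) ^ (-(m:ℤ)), by positivity, fun q hq => ?_⟩
      have : dist x q < (2:ℝ) ^ (-(m:ℤ)) := by
        rw [dist_comm]; exact Metric.mem_ball.1 hq
      exact mem_Uinf_of_dist_lt this
    · refine ((hbasis.comap (Prod.mk x)).le_basis_iff Metric.nhds_basis_ball).2 ?_
      intro ε hε
      obtain ⟨m₁, hm₁⟩ := exists_pow_lt_of_lt_one hε (by norm_num : (1:ℝ)/2 < 1)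
      obtain ⟨k, hk⟩ := exists_nat_gt (∑ a : Fin n, ∑ b : Fin n, dist (x.out a) (x.out b))
      refine ⟨max m₁ k, trivial, fun q hq => ?_⟩
      have hq' : (x, q) ∈ Uinf (X := X) G n (max m₁ k) := hq
      have hle : (2:ℝ) ^ (-((max m₁ k : ℕ)):ℤ) < ε := by
        rw [zpow_neg_natCast_two]
        calc ((1:ℝ)/2) ^ (max m₁ k) ≤ (1/2) ^ m₁ :=
              pow_le_pow_of_le_one (by norm_num) (by norm_num) (le_max_left _ _)
          _ < ε := hm₁
      have hdlt : dist x q < ε := by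
        rcases Nat.eq_zero_or_pos n with hn | hn
        · subst hn
          have h0 : dist x q = 0 := by
            rw [dist_eq_dRest_univ]
            unfold dRest
            calc (⨅ g : G, ((Finset.univ.sup fun i : Fin 0 =>
                    nndist (x.out i) (g • q.out i) : NNReal) : ℝ))
                = ⨅ _ : G, (0:ℝ) := iInf_congr fun g => by simp
              _ = 0 := ciInf_const
          rw [h0]; exact hε
        · set i0 : Fin n := ⟨0, hn⟩
          have huniv : indexSet G x i0 (max m₁ k) = Finset.univ := by
            refine Finset.eq_univ_iff_forall.2 fun j => mem_indexSet.2 ?_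
            have h1a : dist (x.out i0) (x.out j) ≤ ∑ b, dist (x.out i0) (x.out b) :=
              Finset.single_le_sum (fun b _ => dist_nonneg) (Finset.mem_univ j)
            have h1b : ∑ b, dist (x.out i0) (x.out b) ≤
                ∑ a, ∑ b, dist (x.out a) (x.out b) :=
              Finset.single_le_sum (f := fun a => ∑ b, dist (x.out a) (x.out b))
                (fun a _ => Finset.sum_nonneg fun b _ => dist_nonneg) (Finset.mem_univ i0)
            have h2 : (k:ℝ) ≤ 2 ^ k := by
              exact_mod_cast (Nat.lt_two_pow_self (n := k)).le
            have h3 : (2:ℝ) ^ k ≤ 2 ^ (max m₁ k) :=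
              pow_le_pow_right₀ one_le_two (le_max_right _ _)
            linarith
          have hd := (hq' i0).1
          rw [huniv] at hd
          rw [dist_eq_dRest_univ]
          exact lt_trans hd hle
      exact Metric.mem_ball.2 (by rwa [dist_comm])
  have htop2 : (UniformSpace.toTopologicalSpace : TopologicalSpace (OrbQuot G (Fin n → X))) =
      core.toTopologicalSpace := by
    refine TopologicalSpace.ext_nhds fun x => ?_
    exact (hnhds x).trans (UniformSpace.Core.nhds_toTopologicalSpace core x).symm
  have htop : (instTopologicalSpaceQuotient : TopologicalSpace (OrbQuot G (Fin n → X))) =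
      core.toTopologicalSpace := quot_top_eq.trans htop2
  refine ⟨UniformSpace.ofCoreEq core _ htop, rfl, ?_, ?_, rfl⟩
  · show (⨅ m : ℕ, Filter.principal (Uinf (X := X) G n m)).IsCountablyGenerated
    infer_instance
  · exact le_of_eq rfl
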